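/- arXiv:2009.03684 — 2 statements merged into one kernel-verified Lean document; each statement's English description precedes it below -/
import Mathlib

section
/- With V, τ_i, η_j as above, the partial derivative of V with respect to α₁ equals (1/4)·log[ |sin((α₁+α₂-α₃)/2)·sin((α₁+α₃-α₂)/2)·sin((α₁+α₅-α₆)/2)·sin((α₁+α₆-α₅)/2)| / |sin((α₂+α₃-α₁)/2)·sin((α₁+α₂+α₃)/2)·sin((α₅+α₆-α₁)/2)·sin((α₁+α₅+α₆)/2)| ] + (1/2)·log[ |sin(ξ-τ₁) sin(ξ-τ₂)| / |sin(η₁-ξ) sin(η₂-ξ)| ], at all points where none of the sine arguments is an integer multiple of π. -/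
/-!
`log |2 sin t|` is the logarithm of the norm of an analytic function, hence locally
integrable on all of `ℝ`, and the fundamental theorem of calculus gives
`Λ'(θ) = -log |2 sin θ|` wherever `sin θ ≠ 0`. Each term of `V` depending on `α₁` is `Λ` of an
affine function of `α₁` with slope `±1/2`, so the chain rule expresses `∂V/∂α₁` as a signed
sum of `log |2 sin|`; within each group the signs cancel, so the factors `2` drop out and the
sum is the logarithm of the stated ratio.
-/

open Real

/-- The Lobachevsky function `Λ(θ) = -∫₀^θ log|2 sin t| dt`. -/
noncomputable def Lob (θ : ℝ) : ℝ :=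
  -∫ t in (0:ℝ)..θ, Real.log |2 * Real.sin t|

noncomputable def lobDelta (x y z : ℝ) : ℝ :=
  -(1/2) * Lob ((x + y - z)/2) - (1/2) * Lob ((y + z - x)/2) - (1/2) * Lob ((z + x - y)/2)
    + (1/2) * Lob ((x + y + z)/2)

/-- `V(α₁,…,α₆,ξ)` from (the square of) the quantum 6j-symbol asymptotics. -/
noncomputable def Vfun (a1 a2 a3 a4 a5 a6 ξ : ℝ) : ℝ :=
  lobDelta a1 a2 a3 + lobDelta a1 a5 a6 + lobDelta a2 a4 a6 + lobDelta a3 a4 a5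
    - Lob ξ
    + (Lob (ξ - (a1 + a2 + a3)/2) + Lob (ξ - (a1 + a5 + a6)/2)
        + Lob (ξ - (a2 + a4 + a6)/2) + Lob (ξ - (a3 + a4 + a5)/2))
    + (Lob ((a1 + a2 + a4 + a5)/2 - ξ) + Lob ((a1 + a3 + a4 + a6)/2 - ξ)
        + Lob ((a2 + a3 + a5 + a6)/2 - ξ))

open MeasureTheory

lemma intervalIntegrable_log_abs_two_mul_sin (a b : ℝ) :
    IntervalIntegrable (fun t => log |2 * sin t|) volume a b :=
  (analyticOnNhd_const.mul analyticOnNhd_sin).meromorphicOn.intervalIntegrable_log_norm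

lemma hasDerivAt_Lob {θ : ℝ} (h : sin θ ≠ 0) : HasDerivAt Lob (-log |2 * sin θ|) θ := by
  have hmeas : Measurable fun t => log |2 * sin t| := by fun_prop
  have hcont : ContinuousAt (fun t => log |2 * sin t|) θ := by fun_prop (disch := simpa)
  exact (intervalIntegral.integral_hasDerivAt_right (intervalIntegrable_log_abs_two_mul_sin 0 θ)
    hmeas.stronglyMeasurable.stronglyMeasurableAtFilter hcont).neg

lemma hasDerivAt_Lob_comp {f : ℝ → ℝ} {f' x : ℝ} (hf : HasDerivAt f f' x) (h : sin (f x) ≠ 0) :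
    HasDerivAt (fun y => Lob (f y)) (-log |2 * sin (f x)| * f') x :=
  (hasDerivAt_Lob h).comp x hf

lemma log_abs_two_mul_sin_add_sub_sub {a b c d : ℝ} (ha : sin a ≠ 0) (hb : sin b ≠ 0)
    (hc : sin c ≠ 0) (hd : sin d ≠ 0) :
    log |2 * sin a| + log |2 * sin b| - log |2 * sin c| - log |2 * sin d| =
      log (|sin a * sin b| / |sin c * sin d|) := by
  simp only [abs_mul, abs_two, ne_eq, log_div, log_mul, mul_eq_zero, abs_eq_zero,
    OfNat.ofNat_ne_zero, or_self, not_false_eq_true, ha, hb, hc, hd]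
  ring

lemma hasDerivAt_lobDelta {x y z : ℝ} (h₁ : sin ((x + y - z)/2) ≠ 0)
    (h₂ : sin ((x + z - y)/2) ≠ 0) (h₃ : sin ((y + z - x)/2) ≠ 0)
    (h₄ : sin ((x + y + z)/2) ≠ 0) :
    HasDerivAt (fun t => lobDelta t y z)
      ((1/4) * log (|sin ((x + y - z)/2) * sin ((x + z - y)/2)| /
        |sin ((y + z - x)/2) * sin ((x + y + z)/2)|)) x := by
  rw [show (x + z - y)/2 = (z + x - y)/2 by ring] at h₂ ⊢
  have d₁ : HasDerivAt (fun t => (t + y - z)/2) (1/2) x :=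
    (((hasDerivAt_id' x).add_const y).sub_const z).div_const 2
  have d₂ : HasDerivAt (fun t => (z + t - y)/2) (1/2) x :=
    (((hasDerivAt_id' x).const_add z).sub_const y).div_const 2
  have d₃ : HasDerivAt (fun t => (y + z - t)/2) (-1/2) x :=
    ((hasDerivAt_id' x).const_sub (y + z)).div_const 2
  have d₄ : HasDerivAt (fun t => (t + y + z)/2) (1/2) x :=
    (((hasDerivAt_id' x).add_const y).add_const z).div_const 2
  rw [← log_abs_two_mul_sin_add_sub_sub h₁ h₂ h₃ h₄]
  exact ((((hasDerivAt_Lob_comp d₁ h₁).const_mul (-(1/2))).sub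
    ((hasDerivAt_Lob_comp d₃ h₃).const_mul (1/2))).sub
    ((hasDerivAt_Lob_comp d₂ h₂).const_mul (1/2))).add
    ((hasDerivAt_Lob_comp d₄ h₄).const_mul (1/2)) |>.congr_deriv (by ring)

/-- The derivative of `V` in `α₁`. -/
theorem Vfun_deriv_alpha1 (a1 a2 a3 a4 a5 a6 ξ : ℝ)
    (h1 : ∀ n : ℤ, (a1 + a2 - a3)/2 ≠ n * Real.pi)
    (h2 : ∀ n : ℤ, (a1 + a3 - a2)/2 ≠ n * Real.pi)
    (h3 : ∀ n : ℤ, (a1 + a5 - a6)/2 ≠ n * Real.pi)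
    (h4 : ∀ n : ℤ, (a1 + a6 - a5)/2 ≠ n * Real.pi)
    (h5 : ∀ n : ℤ, (a2 + a3 - a1)/2 ≠ n * Real.pi)
    (h6 : ∀ n : ℤ, (a1 + a2 + a3)/2 ≠ n * Real.pi)
    (h7 : ∀ n : ℤ, (a5 + a6 - a1)/2 ≠ n * Real.pi)
    (h8 : ∀ n : ℤ, (a1 + a5 + a6)/2 ≠ n * Real.pi)
    (ht1 : ∀ n : ℤ, ξ - (a1 + a2 + a3)/2 ≠ n * Real.pi)
    (ht2 : ∀ n : ℤ, ξ - (a1 + a5 + a6)/2 ≠ n * Real.pi)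
    (he1 : ∀ n : ℤ, (a1 + a2 + a4 + a5)/2 - ξ ≠ n * Real.pi)
    (he2 : ∀ n : ℤ, (a1 + a3 + a4 + a6)/2 - ξ ≠ n * Real.pi) :
    HasDerivAt (fun x => Vfun x a2 a3 a4 a5 a6 ξ)
      ((1/4) * Real.log
          (|Real.sin ((a1 + a2 - a3)/2) * Real.sin ((a1 + a3 - a2)/2) *
              Real.sin ((a1 + a5 - a6)/2) * Real.sin ((a1 + a6 - a5)/2)| /
            |Real.sin ((a2 + a3 - a1)/2) * Real.sin ((a1 + a2 + a3)/2) *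
              Real.sin ((a5 + a6 - a1)/2) * Real.sin ((a1 + a5 + a6)/2)|) +
        (1/2) * Real.log
          (|Real.sin (ξ - (a1 + a2 + a3)/2) * Real.sin (ξ - (a1 + a5 + a6)/2)| /
            |Real.sin ((a1 + a2 + a4 + a5)/2 - ξ) * Real.sin ((a1 + a3 + a4 + a6)/2 - ξ)|))
      a1 := by
  have hsin {u : ℝ} (hu : ∀ n : ℤ, u ≠ n * π) : sin u ≠ 0 :=
    sin_ne_zero_iff.mpr fun n => (hu n).symm
  have dτ₁ : HasDerivAt (fun x => ξ - (x + a2 + a3)/2) (-(1/2)) a1 :=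
    ((((hasDerivAt_id' a1).add_const a2).add_const a3).div_const 2).const_sub ξ
  have dτ₂ : HasDerivAt (fun x => ξ - (x + a5 + a6)/2) (-(1/2)) a1 :=
    ((((hasDerivAt_id' a1).add_const a5).add_const a6).div_const 2).const_sub ξ
  have dη₁ : HasDerivAt (fun x => (x + a2 + a4 + a5)/2 - ξ) (1/2) a1 :=
    (((((hasDerivAt_id' a1).add_const a2).add_const a4).add_const a5).div_const 2).sub_const ξ
  have dη₂ : HasDerivAt (fun x => (x + a3 + a4 + a6)/2 - ξ) (1/2) a1 :=
    (((((hasDerivAt_id' a1).add_const a3).add_const a4).add_const a6).div_const 2).sub_const ξ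
  have hδ := (hasDerivAt_lobDelta (hsin h1) (hsin h2) (hsin h5) (hsin h6)).add
    (hasDerivAt_lobDelta (hsin h3) (hsin h4) (hsin h7) (hsin h8))
  have hτ := (hasDerivAt_Lob_comp dτ₁ (hsin ht1)).add (hasDerivAt_Lob_comp dτ₂ (hsin ht2))
  have hη := (hasDerivAt_Lob_comp dη₁ (hsin he1)).add (hasDerivAt_Lob_comp dη₂ (hsin he2))
  refine (((((hδ.add_const _).add_const _).sub_const _).add
    ((hτ.add_const _).add_const _)).add (hη.add_const _)).congr_deriv ?_
  simp only [abs_mul, abs_two, ne_eq, log_div, log_mul, mul_eq_zero, abs_eq_zero,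
    OfNat.ofNat_ne_zero, or_self, not_false_eq_true, hsin h1, hsin h2, hsin h3, hsin h4, hsin h5,
    hsin h6, hsin h7, hsin h8, hsin ht1, hsin ht2, hsin he1, hsin he2]
  ring
end

section
/- Let u₁,…,u₆ be nonzero complex numbers with A ≠ 0, and let z_α, z*_α be the two roots of Az² + Bz + C = 0. Then (1 - z_α u₁u₂u₄u₅)(1 - z*_α u₁u₂u₄u₅) = (1/A)·((u₁u₂u₄u₅)²/(u₃u₆))·(1 - u₃/(u₄u₅))(1 - u₆/(u₂u₄))(1 - u₆/(u₁u₅))(1 - u₃/(u₁u₂)). -/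
/-!
Since `z, z*` are the roots of `A x² + B x + C`, Vieta's formulas give
`(1 - z w)(1 - z* w) = (A + B w + C w²) / A` for every `w`. At `w = u₁u₂u₄u₅` the polynomial
`A + B w + C w²` (that is, `w² Q(1/w)` for the quadratic `Q`) factors into the four linear terms
of the right-hand side, which is a rational-function identity in `u₁, …, u₆`.
-/

theorem one_sub_mul_mul_one_sub_mul_of_vieta {K : Type*} [Field K] {A B C z zs : K}
    (hA : A ≠ 0) (hsum : z + zs = -B / A) (hprod : z * zs = C / A) (w : K) :
    (1 - z * w) * (1 - zs * w) = (A + B * w + C * w ^ 2) / A := by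
  calc (1 - z * w) * (1 - zs * w) = 1 - (z + zs) * w + z * zs * w ^ 2 := by ring
    _ = (A + B * w + C * w ^ 2) / A := by rw [hsum, hprod]; field_simp; ring

theorem quadratic_reversed_eval_u1u2u4u5_eq_prod {K : Type*} [Field K] {u1 u2 u3 u4 u5 u6 : K}
    (h1 : u1 ≠ 0) (h2 : u2 ≠ 0) (h3 : u3 ≠ 0) (h4 : u4 ≠ 0) (h5 : u5 ≠ 0) (h6 : u6 ≠ 0) :
    (u1 * u4 + u2 * u5 + u3 * u6 - u1 * u2 * u6 - u1 * u3 * u5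
        - u2 * u3 * u4 - u4 * u5 * u6 + u1 * u2 * u3 * u4 * u5 * u6)
      + (-((u1 - u1⁻¹) * (u4 - u4⁻¹)) - (u2 - u2⁻¹) * (u5 - u5⁻¹)
        - (u3 - u3⁻¹) * (u6 - u6⁻¹)) * (u1 * u2 * u4 * u5)
      + ((u1 * u4)⁻¹ + (u2 * u5)⁻¹ + (u3 * u6)⁻¹ - (u1 * u2 * u6)⁻¹
        - (u1 * u3 * u5)⁻¹ - (u2 * u3 * u4)⁻¹ - (u4 * u5 * u6)⁻¹
        + (u1 * u2 * u3 * u4 * u5 * u6)⁻¹) * (u1 * u2 * u4 * u5) ^ 2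
    = (u1 * u2 * u4 * u5) ^ 2 / (u3 * u6) *
        ((1 - u3 / (u4 * u5)) * (1 - u6 / (u2 * u4)) * (1 - u6 / (u1 * u5)) *
          (1 - u3 / (u1 * u2))) := by
  field_simp
  ring

/-- Vieta computation for the critical point quadratic of the 6j-symbol:
`(1 - z u₁u₂u₄u₅)(1 - z* u₁u₂u₄u₅) =
  (1/A)·((u₁u₂u₄u₅)²/(u₃u₆))·(1 - u₃/(u₄u₅))(1 - u₆/(u₂u₄))(1 - u₆/(u₁u₅))(1 - u₃/(u₁u₂))`. -/
theorem root_product_1245 (u1 u2 u3 u4 u5 u6 : ℂ)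
    (h1 : u1 ≠ 0) (h2 : u2 ≠ 0) (h3 : u3 ≠ 0) (h4 : u4 ≠ 0) (h5 : u5 ≠ 0) (h6 : u6 ≠ 0)
    (A B C : ℂ)
    (hA : A = u1 * u4 + u2 * u5 + u3 * u6 - u1 * u2 * u6 - u1 * u3 * u5
        - u2 * u3 * u4 - u4 * u5 * u6 + u1 * u2 * u3 * u4 * u5 * u6)
    (hA0 : A ≠ 0)
    (hB : B = -((u1 - u1⁻¹) * (u4 - u4⁻¹)) - (u2 - u2⁻¹) * (u5 - u5⁻¹)
        - (u3 - u3⁻¹) * (u6 - u6⁻¹))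
    (hC : C = (u1 * u4)⁻¹ + (u2 * u5)⁻¹ + (u3 * u6)⁻¹ - (u1 * u2 * u6)⁻¹
        - (u1 * u3 * u5)⁻¹ - (u2 * u3 * u4)⁻¹ - (u4 * u5 * u6)⁻¹
        + (u1 * u2 * u3 * u4 * u5 * u6)⁻¹)
    (z zs : ℂ) (hsum : z + zs = -B / A) (hprod : z * zs = C / A) :
    (1 - z * (u1 * u2 * u4 * u5)) * (1 - zs * (u1 * u2 * u4 * u5)) =
      (1 / A) * ((u1 * u2 * u4 * u5) ^ 2 / (u3 * u6)) *
        ((1 - u3 / (u4 * u5)) * (1 - u6 / (u2 * u4)) * (1 - u6 / (u1 * u5)) *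
          (1 - u3 / (u1 * u2))) := by
  have hfactor := quadratic_reversed_eval_u1u2u4u5_eq_prod h1 h2 h3 h4 h5 h6
  rw [← hA, ← hB, ← hC] at hfactor
  rw [one_sub_mul_mul_one_sub_mul_of_vieta hA0 hsum hprod, hfactor]
  ring
end
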